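/- arXiv:quant-ph/9505022 — 2 statements merged into one kernel-verified Lean document; each statement's English description precedes it below -/
import Mathlib

section
/- Define Φ₊, Φ₋ as in the previous statement with a = ℏπ/(4mD) > 0, and define the nonlinear map N_D on L²(ℝ) by (N_D Ψ)(x) = e^{i(mD/ℏ) ln |Ψ(x)|²} Ψ(x) when Ψ(x) ≠ 0 and 0 otherwise. Then |⟨N_D(Φ₋), N_D(Φ₊)⟩| / (‖Φ₋‖·‖Φ₊‖) = sqrt( 2 / (1 + cosh(ℏπ/(2mD))) ); in particular the vectors N_D(Φ₋) and N_D(Φ₊) are not orthogonal although Φ₋ ⊥ Φ₊. -/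
open MeasureTheory Real

/-- The nonlinear gauge transformation `N_D`, with parameter `a = mD/ℏ`:
`(N_a Ψ)(x) = e^{i a ln |Ψ(x)|²} Ψ(x)` where `Ψ(x) ≠ 0`, and `0` elsewhere. -/
noncomputable def ND (a : ℝ) {α : Type*} (Ψ : α → ℂ) : α → ℂ := fun x =>
  if Ψ x = 0 then 0
  else Complex.exp (Complex.I * (a * Real.log (‖Ψ x‖ ^ 2))) * Ψ x

lemma integral_two_pieces {E : Type*} [NormedAddCommGroup E] [NormedSpace ℝ E] [CompleteSpace E] (c1 c2 : E) :
    ∫ x : ℝ, (if x ∈ Set.Ioo (0:ℝ) 1 then c1 else if x ∈ Set.Ioo (-1:ℝ) 0 then c2 else 0) = c1 + c2 := by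
  have h : (fun x : ℝ => if x ∈ Set.Ioo (0:ℝ) 1 then c1 else if x ∈ Set.Ioo (-1:ℝ) 0 then c2 else 0)
      = fun x => Set.indicator (Set.Ioo (0:ℝ) 1) (fun _ => c1) x
        + Set.indicator (Set.Ioo (-1:ℝ) 0) (fun _ => c2) x := by
    funext x
    rw [Set.indicator_apply, Set.indicator_apply]
    by_cases h1 : x ∈ Set.Ioo (0:ℝ) 1
    · have h2 : x ∉ Set.Ioo (-1:ℝ) 0 := fun h2 => absurd h1.1 (by simp [h2.2]; linarith [h2.2])
      simp [h1, h2]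
    · by_cases h2 : x ∈ Set.Ioo (-1:ℝ) 0 <;> simp [h1, h2]
  rw [h, integral_add]
  · rw [integral_indicator_const _ measurableSet_Ioo, integral_indicator_const _ measurableSet_Ioo]
    simp
  · exact (integrable_indicator_iff measurableSet_Ioo).mpr ((integrableOn_const_iff).mpr (Or.inr (by simp)))
  · exact (integrable_indicator_iff measurableSet_Ioo).mpr ((integrableOn_const_iff).mpr (Or.inr (by simp)))

lemma key_phase (a b : ℝ) : (starRingEnd ℂ)
    (Complex.exp (Complex.I * ((b:ℂ) * (Real.log (‖-Complex.exp (-(a:ℂ))‖ ^ 2) : ℝ))) * (-Complex.exp (-(a:ℂ)))) *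
    (Complex.exp (Complex.I * ((b:ℂ) * (Real.log (‖Complex.exp (a:ℂ)‖ ^ 2) : ℝ))) * Complex.exp (a:ℂ))
    = - Complex.exp (Complex.I * ((4*b*a:ℝ))) := by
  have h1 : ‖-Complex.exp (-(a:ℂ))‖ = Real.exp (-a) := by simp [Complex.norm_exp]
  have h2 : ‖Complex.exp (a:ℂ)‖ = Real.exp a := by simp [Complex.norm_exp]
  rw [h1, h2, Real.log_pow, Real.log_pow, Real.log_exp, Real.log_exp]
  rw [map_mul, map_neg, ← Complex.exp_conj]
  simp only [map_mul, Complex.conj_I, Complex.conj_ofReal]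
  rw [← Complex.exp_conj]
  simp only [map_neg, Complex.conj_ofReal]
  rw [mul_neg, neg_mul, ← Complex.exp_add, mul_assoc, ← Complex.exp_add, ← Complex.exp_add]
  push_cast
  ring_nf

/-- although `Φ₋ ⊥ Φ₊`, their images under `N_D` have normalized
inner product of modulus `√(2/(1 + cosh(ℏπ/(2mD))))`; in particular they are
not orthogonal. -/
theorem ND_phi_plus_minus_not_orthogonal
    (ℏ m D : ℝ) (hℏ : 0 < ℏ) (hm : 0 < m) (hD : 0 < D)
    (a : ℝ) (ha : a = ℏ * π / (4 * m * D))
    (Φp Φm : ℝ → ℂ)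
    (hΦp : ∀ x : ℝ, Φp x =
      if x ∈ Set.Ioo (0:ℝ) 1 then Complex.exp a
      else if x ∈ Set.Ioo (-1:ℝ) 0 then 1 else 0)
    (hΦm : ∀ x : ℝ, Φm x =
      if x ∈ Set.Ioo (0:ℝ) 1 then -Complex.exp (-a)
      else if x ∈ Set.Ioo (-1:ℝ) 0 then 1 else 0) :
    ‖∫ x : ℝ, (starRingEnd ℂ) (ND (m * D / ℏ) Φm x) * ND (m * D / ℏ) Φp x‖ /
        (Real.sqrt (∫ x : ℝ, ‖Φm x‖ ^ 2) * Real.sqrt (∫ x : ℝ, ‖Φp x‖ ^ 2)) =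
      Real.sqrt (2 / (1 + Real.cosh (ℏ * π / (2 * m * D)))) ∧
    (∫ x : ℝ, (starRingEnd ℂ) (ND (m * D / ℏ) Φm x) * ND (m * D / ℏ) Φp x) ≠ 0 ∧
    (∫ x : ℝ, (starRingEnd ℂ) (Φm x) * Φp x) = 0 := by
  have hpi : 4 * (m * D / ℏ) * a = π := by
    rw [ha]; field_simp
  have hNN : ∀ x : ℝ, (starRingEnd ℂ) (ND (m * D / ℏ) Φm x) * ND (m * D / ℏ) Φp x
      = (if x ∈ Set.Ioo (0:ℝ) 1 then (1:ℂ) else if x ∈ Set.Ioo (-1:ℝ) 0 then 1 else 0) := by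
    intro x
    simp only [ND, hΦp x, hΦm x]
    by_cases h1 : x ∈ Set.Ioo (0:ℝ) 1
    · simp only [if_pos h1]
      rw [if_neg (neg_ne_zero.mpr (Complex.exp_ne_zero _)), if_neg (Complex.exp_ne_zero _)]
      rw [key_phase a (m * D / ℏ), hpi, mul_comm, Complex.exp_pi_mul_I]
      norm_num
    · by_cases h2 : x ∈ Set.Ioo (-1:ℝ) 0
      · simp only [if_neg h1, if_pos h2]
        norm_num
      · simp [h1, h2]
  have hnm : ∀ x : ℝ, ‖Φm x‖ ^ 2
      = (if x ∈ Set.Ioo (0:ℝ) 1 then Real.exp (-a) ^ 2 else if x ∈ Set.Ioo (-1:ℝ) 0 then 1 else 0) := by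
    intro x; rw [hΦm x]; split_ifs <;> simp [Complex.norm_exp]
  have hnp : ∀ x : ℝ, ‖Φp x‖ ^ 2
      = (if x ∈ Set.Ioo (0:ℝ) 1 then Real.exp a ^ 2 else if x ∈ Set.Ioo (-1:ℝ) 0 then 1 else 0) := by
    intro x; rw [hΦp x]; split_ifs <;> simp [Complex.norm_exp]
  have horth : ∀ x : ℝ, (starRingEnd ℂ) (Φm x) * Φp x
      = (if x ∈ Set.Ioo (0:ℝ) 1 then (-1:ℂ) else if x ∈ Set.Ioo (-1:ℝ) 0 then 1 else 0) := by
    intro x; rw [hΦm x, hΦp x]; split_ifs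
    · rw [map_neg, ← Complex.exp_conj]
      simp only [map_neg, Complex.conj_ofReal]
      rw [neg_mul, ← Complex.exp_add]
      norm_num
    · norm_num
    · norm_num
  have hI1 : (∫ x : ℝ, (starRingEnd ℂ) (ND (m * D / ℏ) Φm x) * ND (m * D / ℏ) Φp x) = 2 := by
    simp only [hNN]; rw [integral_two_pieces]; norm_num
  have hIm : (∫ x : ℝ, ‖Φm x‖ ^ 2) = Real.exp (-a) ^ 2 + 1 := by
    simp only [hnm]; rw [integral_two_pieces]
  have hIp : (∫ x : ℝ, ‖Φp x‖ ^ 2) = Real.exp a ^ 2 + 1 := by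
    simp only [hnp]; rw [integral_two_pieces]
  have ht : ℏ * π / (2 * m * D) = 2 * a := by rw [ha]; field_simp; ring
  refine ⟨?_, ?_, ?_⟩
  · rw [hI1, hIm, hIp, ht]
    have habs : ‖(2:ℂ)‖ = 2 := by norm_num
    rw [habs]
    have harg : 2 / (1 + Real.cosh (2 * a)) = 4 / ((rexp (-a) ^ 2 + 1) * (rexp a ^ 2 + 1)) := by
      have e1 : rexp a ^ 2 = rexp (2 * a) := by rw [sq, ← Real.exp_add]; ring_nf
      have e2 : rexp (-a) ^ 2 = (rexp (2 * a))⁻¹ := by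
        rw [sq, ← Real.exp_add, ← Real.exp_neg]; ring_nf
      rw [Real.cosh_eq, e1, e2, Real.exp_neg]
      have h3 : rexp (2 * a) ≠ 0 := (Real.exp_pos _).ne'
      field_simp
      ring
    rw [harg, Real.sqrt_div (by norm_num : (0:ℝ) ≤ 4),
      show Real.sqrt 4 = 2 from by rw [show (4:ℝ) = 2 ^ 2 by norm_num, Real.sqrt_sq (by norm_num)],
      Real.sqrt_mul (by positivity)]
  · rw [hI1]; norm_num
  · simp only [horth]; rw [integral_two_pieces]; ring
end

section
/- The map N_D : L²(ℝⁿ) → L²(ℝⁿ) is strongly continuous, i.e. if Ψ_k → Ψ in L² norm then N_D(Ψ_k) → N_D(Ψ) in L² norm. -/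
open MeasureTheory Filter
open scoped ENNReal NNReal

noncomputable def NDfun (a : ℝ) (z : ℂ) : ℂ :=
  if z = 0 then 0 else Complex.exp (Complex.I * (a * Real.log (‖z‖ ^ 2))) * z

lemma norm_NDfun (a : ℝ) (z : ℂ) : ‖NDfun a z‖ = ‖z‖ := by
  unfold NDfun
  split
  · simp_all
  · rw [norm_mul]
    have h1 : ‖Complex.exp (Complex.I * (a * Real.log (‖z‖ ^ 2)))‖ = 1 := by
      rw [Complex.norm_exp]
      norm_num [Complex.mul_re]
    rw [h1, one_mul]

lemma nnnorm_NDfun (a : ℝ) (z : ℂ) : ‖NDfun a z‖₊ = ‖z‖₊ :=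
  NNReal.coe_injective (by simpa using norm_NDfun a z)

lemma continuous_NDfun (a : ℝ) : Continuous (NDfun a) := by
  rw [continuous_iff_continuousAt]
  intro z
  by_cases hz : z = 0
  · subst hz
    have h0 : NDfun a 0 = 0 := by simp [NDfun]
    rw [ContinuousAt, h0]
    exact squeeze_zero_norm (fun w => (norm_NDfun a w).le)
      (continuous_norm.tendsto' 0 0 norm_zero)
  · have h0 : ‖z‖ ^ 2 ≠ 0 := pow_ne_zero 2 (norm_ne_zero_iff.2 hz)
    have c1 : ContinuousAt (fun w : ℂ => Complex.exp
        (Complex.I * (a * Real.log (‖w‖ ^ 2))) * w) z := by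
      have habs : ContinuousAt (fun w : ℂ => ‖w‖ ^ 2) z :=
        (continuous_norm.pow 2).continuousAt
      have clog : ContinuousAt (fun w : ℂ => Real.log (‖w‖ ^ 2)) z :=
        habs.log h0
      exact ((Complex.continuous_exp.continuousAt).comp
        (continuousAt_const.mul (continuousAt_const.mul
          ((Complex.continuous_ofReal.continuousAt).comp clog)))).mul continuousAt_id
    refine c1.congr ?_
    filter_upwards [eventually_ne_nhds hz] with w hw
    simp [NDfun, hw]

/-- Generalized dominated convergence (case limit 0). -/
lemma gdct {α : Type*} [MeasurableSpace α] {μ : Measure α}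
    {F G : ℕ → α → ℝ≥0∞} {g : α → ℝ≥0∞}
    (hF : ∀ k, AEMeasurable (F k) μ) (hG : ∀ k, AEMeasurable (G k) μ)
    (hFG : ∀ k, F k ≤ᵐ[μ] G k)
    (hF0 : ∀ᵐ x ∂μ, Tendsto (fun k => F k x) atTop (nhds 0))
    (hGg : ∀ᵐ x ∂μ, Tendsto (fun k => G k x) atTop (nhds (g x)))
    (hGint : Tendsto (fun k => ∫⁻ x, G k x ∂μ) atTop (nhds (∫⁻ x, g x ∂μ)))
    (hgfin : ∫⁻ x, g x ∂μ ≠ ∞) :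
    Tendsto (fun k => ∫⁻ x, F k x ∂μ) atTop (nhds 0) := by
  set I := ∫⁻ x, g x ∂μ with hI
  set D : ℕ → α → ℝ≥0∞ := fun k x => G k x - F k x with hD
  have hDmeas : ∀ k, AEMeasurable (D k) μ := fun k => (hG k).sub (hF k)
  have hDg : ∀ᵐ x ∂μ, Tendsto (fun k => D k x) atTop (nhds (g x)) := by
    filter_upwards [hF0, hGg] with x h1 h2
    have := ENNReal.Tendsto.sub h2 h1 (Or.inr (by simp))
    simpa using this
  have hFatou : I ≤ atTop.liminf fun k => ∫⁻ x, D k x ∂μ := by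
    have : I = ∫⁻ x, atTop.liminf fun k => D k x ∂μ := by
      refine lintegral_congr_ae ?_
      filter_upwards [hDg] with x hx
      exact hx.liminf_eq.symm
    rw [this]
    exact lintegral_liminf_le' hDmeas
  have hsplit : ∀ k, ∫⁻ x, G k x ∂μ = (∫⁻ x, F k x ∂μ) + ∫⁻ x, D k x ∂μ := by
    intro k
    rw [← lintegral_add_left' (hF k) (D k)]
    refine lintegral_congr_ae ?_
    filter_upwards [hFG k] with x hx
    exact (add_tsub_cancel_of_le hx).symm
  rw [ENNReal.tendsto_nhds_zero]
  intro ε hε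
  have hε2 : (0 : ℝ≥0∞) < ε / 2 := ENNReal.div_pos hε.ne' (by norm_num)
  have h1 : ∀ᶠ k in atTop, ∫⁻ x, G k x ∂μ < I + ε / 2 :=
    hGint.eventually_lt_const (ENNReal.lt_add_right hgfin hε2.ne')
  by_cases hIsmall : I ≤ ε / 2
  · filter_upwards [h1] with k hk
    have hFleG : ∫⁻ x, F k x ∂μ ≤ ∫⁻ x, G k x ∂μ := lintegral_mono_ae (hFG k)
    calc ∫⁻ x, F k x ∂μ ≤ I + ε / 2 := (hFleG.trans hk.le)
      _ ≤ ε / 2 + ε / 2 := by gcongr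
      _ = ε := ENNReal.add_halves ε
  · push_neg at hIsmall
    have h2 : ∀ᶠ k in atTop, I - ε / 2 < ∫⁻ x, D k x ∂μ := by
      apply eventually_lt_of_lt_liminf (lt_of_lt_of_le _ hFatou)
      exact ENNReal.sub_lt_self hgfin (hε2.trans hIsmall).ne' hε2.ne'
    filter_upwards [h1, h2] with k hk1 hk2
    have key : (∫⁻ x, F k x ∂μ) + (I - ε / 2) ≤ ε + (I - ε / 2) := by
      calc (∫⁻ x, F k x ∂μ) + (I - ε / 2) ≤ (∫⁻ x, F k x ∂μ) + ∫⁻ x, D k x ∂μ := by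
            gcongr
        _ = ∫⁻ x, G k x ∂μ := (hsplit k).symm
        _ ≤ I + ε / 2 := hk1.le
        _ = ε + (I - ε / 2) := by
            have h : I + ε / 2 = I - ε / 2 + ε / 2 + ε / 2 := by
              rw [tsub_add_cancel_of_le hIsmall.le]
            rw [h, add_assoc, ENNReal.add_halves, add_comm]
    exact ENNReal.le_of_add_le_add_right (ENNReal.sub_ne_top hgfin) key

lemma sq_add_le (x y : ℝ≥0∞) : (x + y) ^ 2 ≤ 4 * (x ^ 2 + y ^ 2) := by
  have h1 : x + y ≤ 2 * max x y := by
    rw [two_mul]; exact add_le_add (le_max_left x y) (le_max_right x y)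
  calc (x + y) ^ 2 ≤ (2 * max x y) ^ 2 := by gcongr
    _ = 4 * (max x y) ^ 2 := by ring
    _ ≤ 4 * (x ^ 2 + y ^ 2) := by
        gcongr
        rcases le_total x y with h | h
        · rw [max_eq_right h]; exact le_add_self
        · rw [max_eq_left h]; exact le_self_add

lemma lint_sq {α : Type*} [MeasurableSpace α] (μ : Measure α) (f : α → ℂ) :
    ∫⁻ x, (‖f x‖₊ : ℝ≥0∞) ^ 2 ∂μ = eLpNorm f 2 μ ^ 2 := by
  rw [eLpNorm_eq_lintegral_rpow_enorm_toReal (by norm_num : (2:ℝ≥0∞) ≠ 0) ENNReal.ofNat_ne_top]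
  rw [← ENNReal.rpow_natCast _ 2, ← ENNReal.rpow_mul]
  norm_num
  rfl

lemma key_conv {α : Type*} [MeasurableSpace α] {μ : Measure α} (a : ℝ)
    {Φ : ℕ → α → ℂ} {Φ' : α → ℂ}
    (hΦ : ∀ k, MemLp (Φ k) 2 μ) (hΦ' : MemLp Φ' 2 μ)
    (hae : ∀ᵐ x ∂μ, Tendsto (fun k => Φ k x) atTop (nhds (Φ' x)))
    (hL2 : Tendsto (fun k => eLpNorm (Φ k - Φ') 2 μ) atTop (nhds 0)) :
    Tendsto (fun k => eLpNorm (ND a (Φ k) - ND a Φ') 2 μ) atTop (nhds 0) := by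
  have hndm : ∀ (f : α → ℂ), AEStronglyMeasurable f μ →
      AEStronglyMeasurable (fun x => NDfun a (f x)) μ :=
    fun f hf => (continuous_NDfun a).comp_aestronglyMeasurable hf
  set F : ℕ → α → ℝ≥0∞ :=
    fun k x => (‖NDfun a (Φ k x) - NDfun a (Φ' x)‖₊ : ℝ≥0∞) ^ 2 with hFdef
  set G : ℕ → α → ℝ≥0∞ :=
    fun k x => 4 * ((‖Φ k x‖₊ : ℝ≥0∞) ^ 2 + (‖Φ' x‖₊ : ℝ≥0∞) ^ 2) with hGdef
  set g : α → ℝ≥0∞ :=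
    fun x => 4 * ((‖Φ' x‖₊ : ℝ≥0∞) ^ 2 + (‖Φ' x‖₊ : ℝ≥0∞) ^ 2) with hgdef
  have hFmeas : ∀ k, AEMeasurable (F k) μ := by
    intro k
    exact (((hndm _ (hΦ k).1).sub (hndm _ hΦ'.1)).enorm).pow_const 2
  have hGmeas : ∀ k, AEMeasurable (G k) μ := fun k =>
    aemeasurable_const.mul
      ((((hΦ k).1.enorm).pow_const 2).add ((hΦ'.1.enorm).pow_const 2))
  have hFG : ∀ k, ∀ x, F k x ≤ G k x := by
    intro k x
    have h1 : (‖NDfun a (Φ k x) - NDfun a (Φ' x)‖₊ : ℝ≥0∞) ≤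
        (‖Φ k x‖₊ : ℝ≥0∞) + (‖Φ' x‖₊ : ℝ≥0∞) := by
      have h2 := nnnorm_sub_le (NDfun a (Φ k x)) (NDfun a (Φ' x))
      rw [nnnorm_NDfun, nnnorm_NDfun] at h2
      exact_mod_cast h2
    calc F k x ≤ ((‖Φ k x‖₊ : ℝ≥0∞) + (‖Φ' x‖₊ : ℝ≥0∞)) ^ 2 := by
          rw [hFdef]; exact pow_le_pow_left₀ zero_le h1 2
      _ ≤ 4 * ((‖Φ k x‖₊ : ℝ≥0∞) ^ 2 + (‖Φ' x‖₊ : ℝ≥0∞) ^ 2) := sq_add_le _ _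
  have hF0 : ∀ᵐ x ∂μ, Tendsto (fun k => F k x) atTop (nhds 0) := by
    filter_upwards [hae] with x hx
    have hdiff : Tendsto (fun k => NDfun a (Φ k x) - NDfun a (Φ' x)) atTop (nhds 0) := by
      have h := ((continuous_NDfun a).tendsto (Φ' x)).comp hx
      have h2 := h.sub (tendsto_const_nhds (x := NDfun a (Φ' x)))
      simpa using h2
    have h3 : Tendsto (fun k => (‖NDfun a (Φ k x) - NDfun a (Φ' x)‖₊ : ℝ≥0∞)) atTop (nhds 0) := by
      have := ENNReal.tendsto_coe.2 hdiff.nnnorm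
      simpa using this
    have h4 := ((ENNReal.continuous_pow 2).tendsto (0 : ℝ≥0∞)).comp h3
    simpa [hFdef, Function.comp_def] using h4
  have hGg : ∀ᵐ x ∂μ, Tendsto (fun k => G k x) atTop (nhds (g x)) := by
    filter_upwards [hae] with x hx
    have h1 : Tendsto (fun k => (‖Φ k x‖₊ : ℝ≥0∞) ^ 2) atTop (nhds ((‖Φ' x‖₊ : ℝ≥0∞) ^ 2)) :=
      ((ENNReal.continuous_pow 2).tendsto _).comp (ENNReal.tendsto_coe.2 hx.nnnorm)
    exact ENNReal.Tendsto.const_mul (h1.add tendsto_const_nhds) (Or.inr (by norm_num))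
  have hnormconv : Tendsto (fun k => eLpNorm (Φ k) 2 μ) atTop (nhds (eLpNorm Φ' 2 μ)) := by
    have hub : ∀ k, eLpNorm (Φ k) 2 μ ≤ eLpNorm Φ' 2 μ + eLpNorm (Φ k - Φ') 2 μ := by
      intro k
      have heq : Φ k = Φ' + (Φ k - Φ') := by funext x; simp
      calc eLpNorm (Φ k) 2 μ = eLpNorm (Φ' + (Φ k - Φ')) 2 μ := by rw [← heq]
        _ ≤ eLpNorm Φ' 2 μ + eLpNorm (Φ k - Φ') 2 μ :=
            eLpNorm_add_le hΦ'.1 ((hΦ k).1.sub hΦ'.1) one_le_two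
    have hlb : ∀ k, eLpNorm Φ' 2 μ - eLpNorm (Φ k - Φ') 2 μ ≤ eLpNorm (Φ k) 2 μ := by
      intro k
      rw [tsub_le_iff_right]
      have heq : Φ' = Φ k + (Φ' - Φ k) := by funext x; simp
      calc eLpNorm Φ' 2 μ = eLpNorm (Φ k + (Φ' - Φ k)) 2 μ := by rw [← heq]
        _ ≤ eLpNorm (Φ k) 2 μ + eLpNorm (Φ' - Φ k) 2 μ :=
            eLpNorm_add_le (hΦ k).1 (hΦ'.1.sub (hΦ k).1) one_le_two
        _ = eLpNorm (Φ k) 2 μ + eLpNorm (Φ k - Φ') 2 μ := by rw [eLpNorm_sub_comm]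
    have htop : eLpNorm Φ' 2 μ ≠ ⊤ := hΦ'.2.ne
    refine tendsto_of_tendsto_of_tendsto_of_le_of_le ?_ ?_ hlb hub
    · have := ENNReal.Tendsto.sub (tendsto_const_nhds (x := eLpNorm Φ' 2 μ)) hL2 (Or.inl htop)
      simpa using this
    · have := Tendsto.add (tendsto_const_nhds (x := eLpNorm Φ' 2 μ)) hL2
      simpa using this
  have hGcalc : ∀ k, ∫⁻ x, G k x ∂μ =
      4 * (eLpNorm (Φ k) 2 μ ^ 2 + eLpNorm Φ' 2 μ ^ 2) := by
    intro k
    rw [hGdef]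
    rw [lintegral_const_mul' _ _ (by norm_num),
      lintegral_add_left' (f := fun x => (‖Φ k x‖₊ : ℝ≥0∞) ^ 2) (((hΦ k).1.enorm).pow_const 2), lint_sq, lint_sq]
  have hgcalc : ∫⁻ x, g x ∂μ = 4 * (eLpNorm Φ' 2 μ ^ 2 + eLpNorm Φ' 2 μ ^ 2) := by
    rw [hgdef]
    rw [lintegral_const_mul' _ _ (by norm_num),
      lintegral_add_left' (f := fun x => (‖Φ' x‖₊ : ℝ≥0∞) ^ 2) ((hΦ'.1.enorm).pow_const 2), lint_sq]
  have hGint : Tendsto (fun k => ∫⁻ x, G k x ∂μ) atTop (nhds (∫⁻ x, g x ∂μ)) := by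
    rw [hgcalc]
    simp_rw [hGcalc]
    have hp : Tendsto (fun k => eLpNorm (Φ k) 2 μ ^ 2) atTop (nhds (eLpNorm Φ' 2 μ ^ 2)) :=
      ((ENNReal.continuous_pow 2).tendsto _).comp hnormconv
    exact ENNReal.Tendsto.const_mul (hp.add tendsto_const_nhds) (Or.inr (by norm_num))
  have hgfin : ∫⁻ x, g x ∂μ ≠ ⊤ := by
    rw [hgcalc]
    have h := hΦ'.2.ne
    exact ENNReal.mul_ne_top (by norm_num)
      (ENNReal.add_ne_top.2 ⟨ENNReal.pow_ne_top h, ENNReal.pow_ne_top h⟩)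
  have hmain := gdct hFmeas hGmeas (fun k => Eventually.of_forall (hFG k)) hF0 hGg hGint hgfin
  have hFint : ∀ k, eLpNorm (ND a (Φ k) - ND a Φ') 2 μ = (∫⁻ x, F k x ∂μ) ^ (1/2 : ℝ) := by
    intro k
    have h2 : ∫⁻ x, F k x ∂μ = eLpNorm (ND a (Φ k) - ND a Φ') 2 μ ^ 2 :=
      lint_sq μ (ND a (Φ k) - ND a Φ')
    rw [h2, ← ENNReal.rpow_natCast _ 2, ← ENNReal.rpow_mul]
    norm_num
  simp_rw [hFint]
  have hc := (ENNReal.continuous_rpow_const (y := (1/2 : ℝ))).tendsto (0 : ℝ≥0∞)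
  have hfin := hc.comp hmain
  simpa [ENNReal.zero_rpow_of_pos, Function.comp_def] using hfin

theorem ND_strongly_continuous (ℏ m D : ℝ) (hℏ : ℏ ≠ 0) (n : ℕ)
    (Ψ : ℕ → (Fin n → ℝ) → ℂ) (Ψ' : (Fin n → ℝ) → ℂ)
    (hΨ : ∀ k, MemLp (Ψ k) 2 (volume : Measure (Fin n → ℝ)))
    (hΨ' : MemLp Ψ' 2 (volume : Measure (Fin n → ℝ)))
    (hconv : Tendsto
      (fun k => eLpNorm (Ψ k - Ψ') 2 (volume : Measure (Fin n → ℝ))) atTop (nhds 0)) :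
    Tendsto
      (fun k => eLpNorm (ND (m * D / ℏ) (Ψ k) - ND (m * D / ℏ) Ψ') 2
        (volume : Measure (Fin n → ℝ))) atTop (nhds 0) := by
  refine tendsto_of_subseq_tendsto fun ns hns => ?_
  have hconv' : Tendsto (fun k => eLpNorm (Ψ (ns k) - Ψ') 2
      (volume : Measure (Fin n → ℝ))) atTop (nhds 0) := hconv.comp hns
  have hTIM : TendstoInMeasure (volume : Measure (Fin n → ℝ)) (fun k => Ψ (ns k)) atTop Ψ' :=
    tendstoInMeasure_of_tendsto_eLpNorm (by norm_num : (2:ℝ≥0∞) ≠ 0)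
      (fun k => (hΨ _).1) hΨ'.1 hconv'
  obtain ⟨ms, hms, haemem⟩ := hTIM.exists_seq_tendsto_ae
  refine ⟨ms, ?_⟩
  have hL2 : Tendsto (fun k => eLpNorm (Ψ (ns (ms k)) - Ψ') 2
      (volume : Measure (Fin n → ℝ))) atTop (nhds 0) := hconv'.comp hms.tendsto_atTop
  exact key_conv (m * D / ℏ) (fun k => hΨ (ns (ms k))) hΨ' haemem hL2
end
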